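/- Let Λ ⊆ ℝ^d be a Meyer set. Suppose (ℝ^d, ℝ^m, ℒ) and (ℝ^d, ℝ^n, ℒ') are two fully Euclidean cut-and-project schemes, W ⊆ ℝ^m and W' ⊆ ℝ^n are precompact with nonempty interior, and F, F' ⊆ ℝ^d are finite sets such that Λ ⊆ Λ(W) + F and Λ ⊆ Λ'(W') + F' (where Λ(W) and Λ'(W') are the model sets in the respective CPS). Then m = n. -/

import Mathlib

/-!
Let `D := Λ(W - W) ∩ Λ'(W' - W')`. Relative density of `Λ` and pigeonhole over `F × F'` give, for
every `v`, a difference of two points of `Λ` that lies in `D` within `2R` of some `t • v`, `t ≥ 1`;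
hence every linear map bounded on `D` vanishes.

For a cut-and-project scheme `(E, H, L)` and such a `D ⊆ Λ(C)` with `C` bounded, the lifts of `D`
generate a subgroup `M ≤ L` spanning `E × H`. Otherwise take a projection `q` with kernel
`V = span M` onto a complement `V' ≠ 0`: `q ∘ inl` is bounded on `D`, so it vanishes and
`q(L) = q(0 × π₂ L)` is dense in `V'`; but `rank q(L) ≤ rank L - dim V = dim V'`, whereas a dense
finitely generated subgroup of `V'` has rank `> dim V'` (its generators span `V'`, and if they
were independent they would generate a discrete subgroup). So `M` is a lattice, and since `π₁` is
injective on `L`, `rank ⟨D⟩ = rank M = d + m`; likewise `rank ⟨D⟩ = d + n`.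
-/

open scoped Pointwise

/-- A set is relatively dense if some radius `R > 0` works: every open ball of
radius `R` contains a point of the set. -/
def RelativelyDense {d : ℕ} (Λ : Set (EuclideanSpace ℝ (Fin d))) : Prop :=
  ∃ R > (0 : ℝ), ∀ x : EuclideanSpace ℝ (Fin d), ∃ y ∈ Λ, y ∈ Metric.ball x R

/-- A set is uniformly discrete if some radius `r > 0` works: every open ball of
radius `r` contains at most one point of the set. -/
def UniformlyDiscrete {d : ℕ} (S : Set (EuclideanSpace ℝ (Fin d))) : Prop :=
  ∃ r > (0 : ℝ), ∀ x : EuclideanSpace ℝ (Fin d), (S ∩ Metric.ball x r).Subsingleton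

/-- A Meyer set: relatively dense with `Λ - Λ` uniformly discrete. -/
def IsMeyerSet {d : ℕ} (Λ : Set (EuclideanSpace ℝ (Fin d))) : Prop :=
  RelativelyDense Λ ∧ UniformlyDiscrete (Λ - Λ)

/-- A lattice in a topological abelian group: a discrete subgroup with compact
quotient (spelled: there is a compact set of representatives). -/
def IsLattice {E : Type*} [AddCommGroup E] [TopologicalSpace E] (L : AddSubgroup E) : Prop :=
  DiscreteTopology L ∧ ∃ K : Set E, IsCompact K ∧ ∀ x : E, ∃ l ∈ L, x - l ∈ K

/-- A fully Euclidean cut-and-project scheme `(ℝ^d, ℝ^m, ℒ)`: `ℒ` is a lattice in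
`ℝ^d × ℝ^m`, the first projection is injective on `ℒ`, and the image of `ℒ` under the
second projection is dense in `ℝ^m`. -/
def IsCPS (d m : ℕ)
    (L : AddSubgroup (EuclideanSpace ℝ (Fin d) × EuclideanSpace ℝ (Fin m))) : Prop :=
  IsLattice L ∧ (∀ p ∈ L, ∀ q ∈ L, p.1 = q.1 → p = q) ∧
    Dense (Prod.snd '' (L : Set (EuclideanSpace ℝ (Fin d) × EuclideanSpace ℝ (Fin m))))

/-- The projection `Λ(W) = {x : ∃ y ∈ W, (x, y) ∈ ℒ}` of the points of the lattice
whose second coordinate lies in the window `W`. -/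
def cutProject {α β : Type*} [AddCommGroup α] [AddCommGroup β]
    (L : AddSubgroup (α × β)) (W : Set β) : Set α :=
  {x | ∃ y ∈ W, (x, y) ∈ L}

open Module Submodule Set Bornology

theorem LinearMap.eq_zero_of_isBounded_range {𝕜 E F : Type*} [NontriviallyNormedField 𝕜]
    [AddCommGroup E] [Module 𝕜 E] [NormedAddCommGroup F] [NormedSpace 𝕜 F] (f : E →ₗ[𝕜] F)
    (hf : IsBounded (Set.range f)) : f = 0 := by
  obtain ⟨C, hC⟩ := isBounded_iff_forall_norm_le.1 hf
  ext x
  by_contra hx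
  obtain ⟨c, hc⟩ := NormedField.exists_lt_norm 𝕜 (C / ‖f x‖)
  have hcx := hC _ ⟨c • x, rfl⟩
  rw [map_smul, norm_smul] at hcx
  rw [div_lt_iff₀ (norm_pos_iff.2 hx)] at hc
  linarith

theorem Submodule.span_eq_top_of_forall_exists_sub_mem {X : Type*} [NormedAddCommGroup X]
    [NormedSpace ℝ X] [FiniteDimensional ℝ X] {L K : Set X} (hK : IsCompact K)
    (hLK : ∀ x, ∃ l ∈ L, x - l ∈ K) : span ℝ L = ⊤ := by
  by_contra h
  obtain ⟨φ, hφ0, hφ⟩ := exists_le_ker_of_lt_top _ (lt_top_iff_ne_top.2 h)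
  refine hφ0 (φ.eq_zero_of_isBounded_range ?_)
  refine (hK.image φ.continuous_of_finiteDimensional).isBounded.subset ?_
  rintro _ ⟨x, rfl⟩
  obtain ⟨l, hl, hxl⟩ := hLK x
  exact ⟨x - l, hxl, by rw [map_sub, LinearMap.mem_ker.1 (hφ (subset_span hl)), sub_zero]⟩

def RayDense {E : Type*} [SeminormedAddCommGroup E] [Module ℝ E] (D : Set E) : Prop :=
  ∃ ρ : ℝ, ∀ v : E, ∃ t : ℝ, 1 ≤ t ∧ ∃ x ∈ D, dist x (t • v) ≤ ρ

theorem RayDense.mono {E : Type*} [SeminormedAddCommGroup E] [Module ℝ E] {D D' : Set E}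
    (hD : RayDense D) (hDD' : D ⊆ D') : RayDense D' := by
  obtain ⟨ρ, hρ⟩ := hD
  refine ⟨ρ, fun v => ?_⟩
  obtain ⟨t, ht, x, hx, hxv⟩ := hρ v
  exact ⟨t, ht, x, hDD' hx, hxv⟩

theorem rayDense_iUnion_sub {E ι : Type*} [SeminormedAddCommGroup E] [NormedSpace ℝ E] [Finite ι]
    (P : ι → Set E) {R : ℝ} (hR : ∀ x : E, ∃ i, ∃ y ∈ P i, dist y x < R) :
    RayDense (⋃ i, P i - P i) := by
  refine ⟨2 * R, fun v => ?_⟩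
  choose i y hy hyv using fun n : ℕ => hR ((n : ℝ) • v)
  obtain ⟨j, k, hjk, hi⟩ := Finite.exists_ne_map_eq_of_infinite i
  wlog hlt : j < k generalizing j k
  · exact this k j hjk.symm hi.symm (hjk.lt_or_gt.resolve_left hlt)
  have hkj : (j : ℝ) + 1 ≤ k := by exact_mod_cast hlt
  refine ⟨k - j, by linarith, y k - y j, mem_iUnion.2 ⟨i k, y k, hy k, y j, hi ▸ hy j, rfl⟩, ?_⟩
  calc dist (y k - y j) (((k : ℝ) - j) • v) = dist (y k - y j) ((k : ℝ) • v - (j : ℝ) • v) := by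
        rw [sub_smul]
    _ ≤ dist (y k) ((k : ℝ) • v) + dist (y j) ((j : ℝ) • v) := dist_sub_sub_le _ _ _ _
    _ ≤ 2 * R := by linarith [hyv k, hyv j]

theorem rayDense_sub_inter_sub {E : Type*} [SeminormedAddCommGroup E] [NormedSpace ℝ E]
    {Λ S S' F F' : Set E} {R : ℝ} (hR : ∀ x, ∃ y ∈ Λ, y ∈ Metric.ball x R) (hF : F.Finite)
    (hF' : F'.Finite) (hS : Λ ⊆ S + F) (hS' : Λ ⊆ S' + F') : RayDense ((S - S) ∩ (S' - S')) := by
  have := hF.to_subtype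
  have := hF'.to_subtype
  let P : F × F' → Set E := fun f => {x | x - f.1 ∈ S ∧ x - f.2 ∈ S'}
  refine (rayDense_iUnion_sub P (R := R) fun x => ?_).mono (iUnion_subset fun f => ?_)
  · obtain ⟨y, hyΛ, hyx⟩ := hR x
    obtain ⟨a, ha, f, hf, rfl⟩ := hS hyΛ
    obtain ⟨a', ha', f', hf', hy⟩ := hS' hyΛ
    refine ⟨(⟨f, hf⟩, ⟨f', hf'⟩), a + f, ⟨?_, ?_⟩, hyx⟩
    · simpa using ha
    · simpa [← hy] using ha'
  · rintro _ ⟨x, hx, x', hx', rfl⟩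
    exact ⟨⟨_, hx.1, _, hx'.1, sub_sub_sub_cancel_right x x' _⟩,
      ⟨_, hx.2, _, hx'.2, sub_sub_sub_cancel_right x x' _⟩⟩

theorem ContinuousLinearMap.eq_zero_of_rayDense {E F : Type*} [SeminormedAddCommGroup E]
    [NormedSpace ℝ E] [NormedAddCommGroup F] [NormedSpace ℝ F] {D : Set E} (hD : RayDense D)
    (f : E →L[ℝ] F) (hf : IsBounded (f '' D)) : f = 0 := by
  obtain ⟨ρ, hρ⟩ := hD
  obtain ⟨C, hC⟩ := isBounded_iff_forall_norm_le.1 hf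
  suffices h : IsBounded (Set.range f) from
    ContinuousLinearMap.coe_injective (LinearMap.eq_zero_of_isBounded_range _ h)
  refine isBounded_iff_forall_norm_le.2 ⟨C + ‖f‖ * ρ, ?_⟩
  rintro _ ⟨v, rfl⟩
  obtain ⟨t, ht, x, hx, hxv⟩ := hρ v
  have hnear : ‖f (t • v) - f x‖ ≤ ‖f‖ * ρ := by
    rw [← map_sub]
    calc ‖f (t • v - x)‖ ≤ ‖f‖ * dist x (t • v) := by
          rw [dist_eq_norm']; exact f.le_opNorm _
      _ ≤ ‖f‖ * ρ := by gcongr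
  calc ‖f v‖ ≤ t * ‖f v‖ := le_mul_of_one_le_left (norm_nonneg _) ht
    _ = ‖f (t • v)‖ := by rw [map_smul, norm_smul, Real.norm_of_nonneg (by linarith)]
    _ ≤ ‖f x‖ + ‖f (t • v) - f x‖ := norm_le_insert' _ _
    _ ≤ C + ‖f‖ * ρ := add_le_add (hC _ ⟨x, hx, rfl⟩) hnear

-- The length `n` is kept separate from `finrank ℤ N` so that `N` can be substituted away.
theorem Submodule.exists_fin_span_range_eq {X : Type*} [AddCommGroup X] [Module ℝ X]
    (N : Submodule ℤ X) [Module.Finite ℤ N] :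
    ∃ (n : ℕ) (g : Fin n → X), n = finrank ℤ N ∧ span ℤ (Set.range g) = N := by
  let : Module ℚ X := Module.compHom X (algebraMap ℚ ℝ)
  have : IsAddTorsionFree X := .of_module_rat X
  have : Module.Free ℤ N := Module.free_of_finite_type_torsion_free'
  let b := Module.finBasis ℤ N
  refine ⟨_, N.subtype ∘ b, rfl, ?_⟩
  rw [Set.range_comp, ← map_span, b.span_eq, map_top, range_subtype]

theorem Submodule.finrank_span_le_finrank_of_subset {X : Type*} [AddCommGroup X] [Module ℝ X]
    {S : Set X} {N : Submodule ℤ X} [Module.Finite ℤ N] (hSN : S ⊆ N) :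
    finrank ℝ (span ℝ S) ≤ finrank ℤ N := by
  obtain ⟨n, g, rfl, hg⟩ := N.exists_fin_span_range_eq
  have hS : span ℝ S ≤ span ℝ (Set.range g) := by
    rw [← span_span_of_tower ℤ ℝ (Set.range g), hg]
    exact span_mono hSN
  have : FiniteDimensional ℝ (span ℝ (Set.range g)) :=
    FiniteDimensional.span_of_finite ℝ (Set.finite_range g)
  calc finrank ℝ (span ℝ S) ≤ finrank ℝ (span ℝ (Set.range g)) := Submodule.finrank_mono hS
    _ ≤ finrank ℤ N := (finrank_range_le_card g).trans (Fintype.card_fin _).le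

theorem Submodule.finrank_map_add_finrank_span_le {X F : Type*} [AddCommGroup X] [Module ℝ X]
    [AddCommGroup F] [Module ℝ F] {L M : Submodule ℤ X} [Module.Finite ℤ L] (hML : M ≤ L)
    (q : X →ₗ[ℝ] F) (hMq : ∀ x ∈ M, q x = 0) :
    finrank ℤ (L.map (q.restrictScalars ℤ)) + finrank ℝ (span ℝ (M : Set X)) ≤ finrank ℤ L := by
  let g := (q.restrictScalars ℤ).domRestrict L
  have hrank := (LinearMap.ker g).finrank_quotient_add_finrank
  rw [g.quotKerEquivRange.finrank_eq, LinearMap.range_domRestrict] at hrank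
  let K := (LinearMap.ker g).map L.subtype
  have hK : finrank ℤ K = finrank ℤ (LinearMap.ker g) :=
    (equivMapOfInjective _ L.injective_subtype _).finrank_eq.symm
  have hMK : M ≤ K := fun x hx => ⟨⟨x, hML hx⟩, hMq x hx, rfl⟩
  have := finrank_span_le_finrank_of_subset (show (M : Set X) ⊆ K from hMK)
  omega

theorem Submodule.finrank_lt_finrank_of_dense {F : Type*} [NormedAddCommGroup F] [NormedSpace ℝ F]
    [FiniteDimensional ℝ F] [Nontrivial F] (A : Submodule ℤ F) [Module.Finite ℤ A]
    (hA : Dense (A : Set F)) : finrank ℝ F < finrank ℤ A := by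
  by_contra! hle
  obtain ⟨n, g, hn, rfl⟩ := A.exists_fin_span_range_eq
  rw [← hn] at hle
  have hspan : span ℝ (Set.range g) = ⊤ := by
    refine eq_top_iff.2 fun x _ => ?_
    refine (span ℝ (Set.range g)).closed_of_finiteDimensional.closure_subset_iff.2 ?_
      (hA.closure_eq.symm ▸ mem_univ x)
    exact span_le_restrictScalars ℤ ℝ _
  have hcard : Fintype.card (Fin n) = finrank ℝ F := by
    refine le_antisymm (by simpa using hle) ?_
    have := finrank_range_le_card (R := ℝ) g
    rwa [Set.finrank, hspan, finrank_top] at this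
  -- `g` is an `ℝ`-basis, so `A` is discrete, hence closed, hence everything.
  let b := Basis.mk (linearIndependent_of_top_le_span_of_card_eq_finrank hspan.ge hcard) hspan.ge
  have hb : (span ℤ (Set.range b) : Set F) = univ := by
    have : IsClosed (span ℤ (Set.range b) : Set F) :=
      AddSubgroup.isClosed_of_discrete (H := (span ℤ (Set.range b)).toAddSubgroup)
    rw [← this.closure_eq, Basis.coe_mk, hA.closure_eq]
  have hpos : 0 < n := by rw [← Fintype.card_fin n, hcard]; exact finrank_pos
  let i : Fin n := ⟨0, hpos⟩
  have hhalf : (2⁻¹ : ℝ) • b i ∈ span ℤ (Set.range b) := by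
    rw [← SetLike.mem_coe, hb]; trivial
  obtain ⟨k, hk⟩ := (b.mem_span_iff_repr_mem ℤ _).1 hhalf i
  simp only [algebraMap_int_eq, eq_intCast, map_smul, b.repr_self, Finsupp.smul_single, smul_eq_mul,
    mul_one, Finsupp.single_eq_same] at hk
  have h2k : ((2 * k : ℤ) : ℝ) = 1 := by push_cast; rw [hk]; norm_num
  have : 2 * k = 1 := by exact_mod_cast h2k
  omega

section

variable {E H : Type*} [NormedAddCommGroup E] [NormedSpace ℝ E] [FiniteDimensional ℝ E]
  [NormedAddCommGroup H] [NormedSpace ℝ H] [FiniteDimensional ℝ H]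

theorem span_eq_top_of_rayDense_lifts {L M : Submodule ℤ (E × H)} [DiscreteTopology L]
    [IsZLattice ℝ L] (hdense : Dense (Prod.snd '' (L : Set (E × H)))) (hML : M ≤ L)
    {D : Set E} (hD : RayDense D) {C : Set H} (hC : IsBounded C)
    (hDM : ∀ x ∈ D, ∃ y ∈ C, (x, y) ∈ M) : span ℝ (M : Set (E × H)) = ⊤ := by
  set V := span ℝ (M : Set (E × H))
  obtain ⟨V', hVV'⟩ := V.exists_isCompl
  let q := V'.projectionOnto V hVV'.symm
  have hq : ∀ p, q p = 0 ↔ p ∈ V := fun p => by rw [← LinearMap.mem_ker, ker_projectionOnto]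
  by_contra hV
  have : Nontrivial V' := nontrivial_iff_ne_bot.2 fun h => hV (eq_top_of_isCompl_bot (h ▸ hVV'))
  let qc := LinearMap.toContinuousLinearMap q
  let β := qc ∘L ContinuousLinearMap.inr ℝ E H
  have hinl : qc ∘L ContinuousLinearMap.inl ℝ E H = 0 := by
    refine ContinuousLinearMap.eq_zero_of_rayDense hD _ ?_
    obtain ⟨c, hc⟩ := isBounded_iff_forall_norm_le.1 hC
    refine isBounded_iff_forall_norm_le.2 ⟨‖β‖ * c, ?_⟩
    rintro _ ⟨x, hx, rfl⟩
    obtain ⟨y, hy, hxy⟩ := hDM x hx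
    have hsum : q (x, 0) + β y = 0 := by
      change q (x, 0) + q (0, y) = 0
      rw [← map_add, Prod.mk_add_mk, add_zero, zero_add, hq]
      exact subset_span hxy
    calc ‖q (x, 0)‖ = ‖β y‖ := by rw [eq_neg_of_add_eq_zero_left hsum, norm_neg]
      _ ≤ ‖β‖ * c := (β.le_opNorm y).trans (by gcongr; exact hc y hy)
  have hfactor : ∀ p : E × H, q p = β p.2 := fun p => by
    have h0 : q (p.1, 0) = 0 := ContinuousLinearMap.ext_iff.1 hinl p.1
    calc q p = q ((p.1, 0) + (0, p.2)) := by simp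
      _ = β p.2 := by rw [map_add, h0, zero_add]; rfl
  let A := L.map (q.restrictScalars ℤ)
  have hA : Dense (A : Set V') := by
    have hβ : Function.Surjective β := fun v => by
      obtain ⟨p, rfl⟩ := projectionOnto_surjective hVV'.symm v
      exact ⟨p.2, (hfactor p).symm⟩
    have hAL : (A : Set V') = β '' (Prod.snd '' (L : Set (E × H))) := by
      rw [image_image, map_coe]
      exact image_congr fun p _ => hfactor p
    rw [hAL]
    exact hβ.denseRange.dense_image β.continuous hdense
  have hrank_lt := A.finrank_lt_finrank_of_dense hA
  have hrank_le : finrank ℤ A + finrank ℝ V ≤ finrank ℤ L :=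
    finrank_map_add_finrank_span_le hML q fun p hp => (hq p).2 (subset_span hp)
  have hdim := finrank_add_eq_of_isCompl hVV'
  have hrank_L := ZLattice.rank ℝ L
  omega

theorem finrank_span_eq_of_subset_cutProject {L : AddSubgroup (E × H)} (hL : IsLattice L)
    (hinj : ∀ p ∈ L, ∀ q ∈ L, p.1 = q.1 → p = q) (hdense : Dense (Prod.snd '' (L : Set (E × H))))
    {D : Set E} (hD : RayDense D) {C : Set H} (hC : IsBounded C) (hDC : D ⊆ cutProject L C) :
    finrank ℤ (span ℤ D) = finrank ℝ E + finrank ℝ H := by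
  obtain ⟨hdisc, K, hK, hLK⟩ := hL
  let LZ := L.toIntSubmodule
  have : DiscreteTopology LZ := hdisc
  have : IsZLattice ℝ LZ := ⟨span_eq_top_of_forall_exists_sub_mem hK hLK⟩
  let M := span ℤ {p : E × H | p ∈ L ∧ p.1 ∈ D ∧ p.2 ∈ C}
  have hML : M ≤ LZ := span_le.2 fun p hp => hp.1
  have : DiscreteTopology M := DiscreteTopology.of_subset hdisc hML
  have : IsZLattice ℝ M := ⟨span_eq_top_of_rayDense_lifts hdense hML hD hC fun x hx => by
    obtain ⟨y, hy, hxy⟩ := hDC hx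
    exact ⟨y, hy, subset_span ⟨hxy, hx, hy⟩⟩⟩
  have hinjM : Function.Injective (LinearMap.fst ℤ E H ∘ₗ M.subtype) := fun p q hpq =>
    Subtype.ext (hinj _ (hML p.2) _ (hML q.2) hpq)
  have hrange : LinearMap.range (LinearMap.fst ℤ E H ∘ₗ M.subtype) = span ℤ D := by
    rw [LinearMap.range_comp, range_subtype, map_span]
    congr 1
    ext x
    refine ⟨fun ⟨p, hp, hpx⟩ => hpx ▸ hp.2.1, fun hx => ?_⟩
    obtain ⟨y, hy, hxy⟩ := hDC hx
    exact ⟨(x, y), ⟨hxy, hx, hy⟩, rfl⟩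
  rw [← hrange, LinearMap.finrank_range_of_inj hinjM, ZLattice.rank ℝ M, finrank_prod]

end

theorem cutProject_sub_subset {α β : Type*} [AddCommGroup α] [AddCommGroup β]
    (L : AddSubgroup (α × β)) (W : Set β) :
    cutProject L W - cutProject L W ⊆ cutProject L (W - W) := by
  rintro _ ⟨x, ⟨y, hy, hxy⟩, x', ⟨y', hy', hxy'⟩, rfl⟩
  exact ⟨y - y', sub_mem_sub hy hy', L.sub_mem hxy hxy'⟩

theorem stmt_14_general {d m n : ℕ} (Λ : Set (EuclideanSpace ℝ (Fin d))) (hΛ : IsMeyerSet Λ)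
    (L : AddSubgroup (EuclideanSpace ℝ (Fin d) × EuclideanSpace ℝ (Fin m)))
    (hL : IsCPS d m L) (W : Set (EuclideanSpace ℝ (Fin m)))
    (hWc : IsCompact (closure W))
    (L' : AddSubgroup (EuclideanSpace ℝ (Fin d) × EuclideanSpace ℝ (Fin n)))
    (hL' : IsCPS d n L') (W' : Set (EuclideanSpace ℝ (Fin n)))
    (hWc' : IsCompact (closure W'))
    (F F' : Set (EuclideanSpace ℝ (Fin d))) (hF : F.Finite) (hF' : F'.Finite)
    (hsub : Λ ⊆ cutProject L W + F) (hsub' : Λ ⊆ cutProject L' W' + F') :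
    m = n := by
  obtain ⟨⟨R, -, hR⟩, -⟩ := hΛ
  have hD : RayDense (cutProject L (W - W) ∩ cutProject L' (W' - W')) :=
    (rayDense_sub_inter_sub hR hF hF' hsub hsub').mono
      (inter_subset_inter (cutProject_sub_subset L W) (cutProject_sub_subset L' W'))
  have hW := hWc.isBounded.subset subset_closure
  have hW' := hWc'.isBounded.subset subset_closure
  have hm := finrank_span_eq_of_subset_cutProject hL.1 hL.2.1 hL.2.2 hD (hW.sub hW)
    inter_subset_left
  have hn := finrank_span_eq_of_subset_cutProject hL'.1 hL'.2.1 hL'.2.2 hD (hW'.sub hW')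
    inter_subset_right
  rw [finrank_euclideanSpace_fin, finrank_euclideanSpace_fin] at hm hn
  omega

/-- if a Meyer set `Λ ⊆ ℝ^d` satisfies `Λ ⊆ Λ(W) + F` and
`Λ ⊆ Λ'(W') + F'` for fully Euclidean model sets in CPSs `(ℝ^d, ℝ^m, ℒ)` and
`(ℝ^d, ℝ^n, ℒ')` and finite sets `F, F'`, then `m = n`. -/
theorem stmt_14 {d m n : ℕ} (Λ : Set (EuclideanSpace ℝ (Fin d))) (hΛ : IsMeyerSet Λ)
    (L : AddSubgroup (EuclideanSpace ℝ (Fin d) × EuclideanSpace ℝ (Fin m)))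
    (hL : IsCPS d m L) (W : Set (EuclideanSpace ℝ (Fin m)))
    (hWc : IsCompact (closure W)) (hWi : (interior W).Nonempty)
    (L' : AddSubgroup (EuclideanSpace ℝ (Fin d) × EuclideanSpace ℝ (Fin n)))
    (hL' : IsCPS d n L') (W' : Set (EuclideanSpace ℝ (Fin n)))
    (hWc' : IsCompact (closure W')) (hWi' : (interior W').Nonempty)
    (F F' : Set (EuclideanSpace ℝ (Fin d))) (hF : F.Finite) (hF' : F'.Finite)
    (hsub : Λ ⊆ cutProject L W + F) (hsub' : Λ ⊆ cutProject L' W' + F') :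
    m = n :=
  stmt_14_general Λ hΛ L hL W hWc L' hL' W' hWc' F F' hF hF' hsub hsub'
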